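/- The discretized test operator is close to the exact one in operator norm: ‖Ω_h(𝒜) − Ω(𝒜)‖ ≤ (Σ_{l=1}^m |A_l|/m) sin(π/(4h)) = (n/m) sin(π/(4h)). -/

import Mathlib

open scoped BigOperators ComplexOrder
open Matrix Complex

noncomputable section

/-- Computational-basis index set of `(ℂ²)^{⊗n}`. -/
abbrev QIdx (n : ℕ) := Fin n → Fin 2

/-- Linear operators on `(ℂ²)^{⊗n}`, represented as matrices. -/
abbrev QOp (n : ℕ) := Matrix (QIdx n) (QIdx n) ℂ

/-- A bit viewed as a real number. -/
def bR (b : Fin 2) : ℝ := (b : ℕ)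

/-- The ℓ²→ℓ² operator norm of a matrix. -/
noncomputable def opNorm {ι : Type*} [Fintype ι] [DecidableEq ι] (M : Matrix ι ι ℂ) : ℝ :=
  ‖Matrix.toEuclideanCLM (𝕜 := ℂ) M‖

/-- The weighted graph state `|G⟩`, as amplitudes
`⟨z|G⟩ = 2^{-n/2} ∏_{j<k} e^{i θ_{jk} z_j z_k}` (for symmetric `θ`,
`∑_{j<k} = (1/2) ∑_{j,k}`). -/
noncomputable def gVec (n : ℕ) (θ : Fin n → Fin n → ℝ) : QIdx n → ℂ :=
  fun z => ((Real.sqrt (2 ^ n))⁻¹ : ℝ) *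
    Complex.exp (Complex.I * ((1 / 2 * ∑ j, ∑ k, θ j k * bR (z j) * bR (z k) : ℝ) : ℂ))

/-- The rank-one projection `|G⟩⟨G|`. -/
noncomputable def gProj (n : ℕ) (θ : Fin n → Fin n → ℝ) : QOp n :=
  Matrix.vecMulVec (gVec n θ) (star (gVec n θ))

/-- `α_k(z) = ∑_{j ∈ C_k} θ_{jk} z_j` (using `θ_{jk} = 0` on non-edges). -/
noncomputable def alphaAngle (n : ℕ) (θ : Fin n → Fin n → ℝ) (k : Fin n) (z : QIdx n) : ℝ :=
  ∑ j, θ j k * bR (z j)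

/-- The discretization `α ↦ α^h`, the unique point `jπ/h` with
`jπ/h - π/(2h) ≤ α < jπ/h + π/(2h)`. -/
noncomputable def alphaH (h : ℕ) (α : ℝ) : ℝ :=
  (⌊(h : ℝ) * α / Real.pi + 1 / 2⌋ : ℤ) * Real.pi / h

/-- Matrix entry `⟨b|α⟩⟨α|b'⟩ = (1/2) e^{iα(b-b')}` of the projection onto
`|α⟩ = (|0⟩ + e^{iα}|1⟩)/√2`. -/
noncomputable def phaseFac (α : ℝ) (b b' : Fin 2) : ℂ :=
  (1 / 2 : ℂ) * Complex.exp (Complex.I * ((α * (bR b - bR b') : ℝ) : ℂ))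

/-- The projection `P_l = ∏_{k ∈ A_l} Q_k`, written out entrywise:
`P_l = ∑_z (⊗_{k∈A_l} |α_k(z)⟩⟨α_k(z)|) ⊗ |z⟩⟨z|_{A_l^c}`. -/
noncomputable def Pop (n : ℕ) (θ : Fin n → Fin n → ℝ) (A : Finset (Fin n)) : QOp n :=
  Matrix.of fun x y =>
    if ∀ j ∉ A, x j = y j then ∏ k ∈ A, phaseFac (alphaAngle n θ k x) (x k) (y k) else 0

/-- The test operator `Ω(𝒜) = (1/m) ∑_l P_l`. -/
noncomputable def OmegaA (n m : ℕ) (θ : Fin n → Fin n → ℝ) (A : Fin m → Finset (Fin n)) :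
    QOp n :=
  (m : ℂ)⁻¹ • ∑ l, Pop n θ (A l)

/-- The discretized projection `P_{l;h}` (replace `α_k(z)` by `α_k^h(z)`). -/
noncomputable def PopH (n : ℕ) (θ : Fin n → Fin n → ℝ) (h : ℕ) (A : Finset (Fin n)) : QOp n :=
  Matrix.of fun x y =>
    if ∀ j ∉ A, x j = y j then
      ∏ k ∈ A, phaseFac (alphaH h (alphaAngle n θ k x)) (x k) (y k) else 0

/-- The discretized test operator `Ω_h(𝒜) = (1/m) ∑_l P_{l;h}`. -/
noncomputable def OmegaAH (n m : ℕ) (θ : Fin n → Fin n → ℝ) (h : ℕ)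
    (A : Fin m → Finset (Fin n)) : QOp n :=
  (m : ℂ)⁻¹ • ∑ l, PopH n θ h (A l)

/-- Entry of the single-site operator `(1/h) |α⟩⟨α| + (1 - 1/h) I`. -/
noncomputable def mixFac (h : ℕ) (α : ℝ) (b b' : Fin 2) : ℂ :=
  (1 - (h : ℂ)⁻¹) * (if b = b' then 1 else 0) + (h : ℂ)⁻¹ * phaseFac α b b'

/-- `P̄_l = ∏_{k ∈ A_l} ((1/h(k)) Q_k + (1 - 1/h(k)) I)`, written out entrywise. -/
noncomputable def PBar (n : ℕ) (θ : Fin n → Fin n → ℝ) (hf : Fin n → ℕ) (A : Finset (Fin n)) :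
    QOp n :=
  Matrix.of fun x y =>
    if ∀ j ∉ A, x j = y j then ∏ k ∈ A, mixFac (hf k) (alphaAngle n θ k x) (x k) (y k) else 0

/-- `Ω̄(𝒜)_𝐡 = (1/m) ∑_l P̄_l`. -/
noncomputable def OmegaBar (n m : ℕ) (θ : Fin n → Fin n → ℝ) (hf : Fin n → ℕ)
    (A : Fin m → Finset (Fin n)) : QOp n :=
  (m : ℂ)⁻¹ • ∑ l, PBar n θ hf (A l)

/-- `P̄_{l;h} = ∏_{k ∈ A_l} ((1/h) Q_{k;h} + (1 - 1/h) I)`, written out entrywise. -/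
noncomputable def PBarH (n : ℕ) (θ : Fin n → Fin n → ℝ) (h : ℕ) (A : Finset (Fin n)) : QOp n :=
  Matrix.of fun x y =>
    if ∀ j ∉ A, x j = y j then
      ∏ k ∈ A, mixFac h (alphaH h (alphaAngle n θ k x)) (x k) (y k) else 0

/-- `Ω̄_h(𝒜) = (1/m) ∑_l P̄_{l;h}`. -/
noncomputable def OmegaBarH (n m : ℕ) (θ : Fin n → Fin n → ℝ) (h : ℕ)
    (A : Fin m → Finset (Fin n)) : QOp n :=
  (m : ℂ)⁻¹ • ∑ l, PBarH n θ h (A l)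

/-- Index set for `N+1` copies of the `n`-qubit space. -/
abbrev BIdx (n N : ℕ) := Fin (N + 1) → QIdx n

/-- `(⊗_{j ≠ i} Ω) ⊗ I_i` acting on the `N+1` copies. -/
noncomputable def testAll (n N : ℕ) (Ω : QOp n) (i : Fin (N + 1)) :
    Matrix (BIdx n N) (BIdx n N) ℂ :=
  Matrix.of fun x y =>
    (if x i = y i then 1 else 0) * ∏ j ∈ Finset.univ.erase i, Ω (x j) (y j)

/-- Acceptance probability `p = (1/(N+1)) ∑_i Tr[((⊗_{j≠i} Ω) ⊗ I_i) ρ]` of the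
`N`-random sampling test of `Ω` on a state `ρ` of `N+1` copies. -/
noncomputable def acceptProb (n N : ℕ) (Ω : QOp n) (ρ : Matrix (BIdx n N) (BIdx n N) ℂ) : ℝ :=
  (((N : ℂ) + 1)⁻¹ * ∑ i, (testAll n N Ω i * ρ).trace).re

/-- Partial trace over all copies except copy `i`. -/
noncomputable def ptraceAt (n N : ℕ) (i : Fin (N + 1))
    (M : Matrix (BIdx n N) (BIdx n N) ℂ) : QOp n :=
  Matrix.of fun a b => ∑ x : BIdx n N, if x i = a then M x (Function.update x i b) else 0

/-- The conditional state of the remaining copy given that the test is passed: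
`σ = (1/((N+1)p)) ∑_i Tr_{j≠i}[((⊗_{j≠i} Ω) ⊗ I_i) ρ]`. -/
noncomputable def condState (n N : ℕ) (Ω : QOp n) (ρ : Matrix (BIdx n N) (BIdx n N) ℂ) :
    QOp n :=
  (((((N : ℝ) + 1) * acceptProb n N Ω ρ : ℝ) : ℂ))⁻¹ •
    ∑ i, ptraceAt n N i (testAll n N Ω i * ρ)

/-- The i.i.d. state `(|G⟩⟨G|)^{⊗(N+1)}`. -/
noncomputable def iidState (n N : ℕ) (θ : Fin n → Fin n → ℝ) :
    Matrix (BIdx n N) (BIdx n N) ℂ :=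
  Matrix.of fun x y => ∏ j, gVec n θ (x j) * star (gVec n θ (y j))


/-!
Each `P_l` (resp. `P_{l;h}`) has entries that vanish unless `x` and `y` agree off `A_l`, and are
then a product over `k ∈ A_l` of single-site factors `½ e^{iα_k (x_k - y_k)}` of modulus `½`.
Rounding `α_k` to `α_k^h` moves it by at most `π/(2h)`, so a factor changes by at most
`sin(π/(4h))`, and only where `x_k ≠ y_k`. Telescoping the product gives an entrywise majorant of
`P_{l;h} - P_l` that is symmetric in `x, y` and whose row sums equal `|A_l| sin(π/(4h))`;
Schur's test (row and column sums bound the ℓ² operator norm) then bounds the average.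
-/

theorem abs_alphaH_sub_le {h : ℕ} (hh : 0 < h) (α : ℝ) :
    |alphaH h α - α| ≤ Real.pi / (2 * h) := by
  have hh' : (0 : ℝ) < h := by exact_mod_cast hh
  set t := h * α / Real.pi with ht
  have hdiff : alphaH h α - α = -((t - round t) * (Real.pi / h)) := by
    rw [alphaH, ← round_eq, ht]
    field_simp
    ring
  rw [hdiff, abs_neg, abs_mul, abs_of_pos (by positivity : 0 < Real.pi / h)]
  calc _ ≤ 1 / 2 * (Real.pi / h) := by gcongr; exact abs_sub_round _
    _ = Real.pi / (2 * h) := by ring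

theorem Real.abs_sin_le_sin_of_abs_le {x c : ℝ} (hxc : |x| ≤ c) (hc : c ≤ Real.pi / 2) :
    |Real.sin x| ≤ Real.sin c := by
  rw [Real.abs_sin_eq_sin_abs_of_abs_le_pi (by linarith [Real.pi_pos])]
  exact Real.sin_le_sin_of_le_of_le_pi_div_two (by linarith [abs_nonneg x, Real.pi_pos]) hc hxc

theorem Complex.norm_exp_I_mul_ofReal_sub_exp_I_mul_ofReal (t s : ℝ) :
    ‖exp (I * t) - exp (I * s)‖ = ‖2 * Real.sin ((t - s) / 2)‖ := by
  have hfactor : exp (I * t) - exp (I * s) = exp (I * s) * (exp (I * ↑(t - s)) - 1) := by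
    rw [mul_sub, ← Complex.exp_add]
    push_cast
    ring_nf
  rw [hfactor, norm_mul, norm_exp_I_mul_ofReal, one_mul, norm_exp_I_mul_ofReal_sub_one]

theorem norm_phaseFac (α : ℝ) (b b' : Fin 2) : ‖phaseFac α b b'‖ = 1 / 2 := by
  rw [phaseFac, norm_mul, Complex.norm_exp_I_mul_ofReal]
  norm_num

theorem norm_phaseFac_alphaH_sub_le {h : ℕ} (hh : 1 ≤ h) (α : ℝ) (b b' : Fin 2) :
    ‖phaseFac (alphaH h α) b b' - phaseFac α b b'‖ ≤
      if b = b' then 0 else Real.sin (Real.pi / (4 * h)) := by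
  split_ifs with hbb
  · simp [hbb, phaseFac]
  have hh' : (1 : ℝ) ≤ h := by exact_mod_cast hh
  have hd : |bR b - bR b'| = 1 := by
    fin_cases b <;> fin_cases b' <;> simp_all [bR]
  have hangle : |(alphaH h α * (bR b - bR b') - α * (bR b - bR b')) / 2| ≤
      Real.pi / (4 * h) := by
    rw [← sub_mul, abs_div, abs_mul, hd, mul_one, abs_two,
      div_le_iff₀ two_pos]
    calc _ ≤ Real.pi / (2 * h) := abs_alphaH_sub_le (by omega) α
      _ = _ := by field_simp; ring
  have hquarter : Real.pi / (4 * h) ≤ Real.pi / 2 := by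
    gcongr; linarith
  rw [phaseFac, phaseFac, ← mul_sub, norm_mul,
    Complex.norm_exp_I_mul_ofReal_sub_exp_I_mul_ofReal, norm_mul, Real.norm_eq_abs,
    Real.norm_eq_abs]
  have hsin := Real.abs_sin_le_sin_of_abs_le hangle hquarter
  norm_num
  linarith

theorem Finset.norm_prod_sub_prod_le {ι R : Type*} [DecidableEq ι] [NormedCommRing R]
    [NormOneClass R] (s : Finset ι) {a b : ι → R} {c : ι → ℝ}
    (ha : ∀ i ∈ s, ‖a i‖ ≤ c i) (hb : ∀ i ∈ s, ‖b i‖ ≤ c i) :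
    ‖∏ i ∈ s, a i - ∏ i ∈ s, b i‖ ≤ ∑ i ∈ s, ‖a i - b i‖ * ∏ j ∈ s.erase i, c j := by
  induction s using Finset.induction_on with
  | empty => simp
  | @insert i s hi ih =>
    simp only [Finset.mem_insert, forall_eq_or_imp] at ha hb
    have hc : 0 ≤ c i := (norm_nonneg _).trans ha.1
    have hsplit : ∏ j ∈ insert i s, a j - ∏ j ∈ insert i s, b j =
        (a i - b i) * ∏ j ∈ s, a j + b i * (∏ j ∈ s, a j - ∏ j ∈ s, b j) := by
      rw [Finset.prod_insert hi, Finset.prod_insert hi]; ring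
    have herase : ∀ k ∈ s, (insert i s).erase k = insert i (s.erase k) := fun k hk =>
      Finset.erase_insert_of_ne (fun h => hi (h ▸ hk))
    rw [hsplit, Finset.sum_insert hi, Finset.erase_insert hi,
      Finset.sum_congr rfl fun k hk => by
        rw [herase k hk, Finset.prod_insert fun h => hi (Finset.mem_of_mem_erase h)],
      Finset.sum_congr rfl fun k _ => mul_left_comm _ (c i) _, ← Finset.mul_sum]
    have hprod : ‖∏ j ∈ s, a j‖ ≤ ∏ j ∈ s, c j := (Finset.norm_prod_le s a).trans
      (Finset.prod_le_prod (fun j _ => norm_nonneg _) ha.2)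
    refine (norm_add_le _ _).trans (add_le_add ?_ ?_) <;> refine (norm_mul_le _ _).trans ?_
    · exact mul_le_mul_of_nonneg_left hprod (norm_nonneg _)
    · exact mul_le_mul hb.1 (ih ha.2 hb.2) (norm_nonneg _) hc

theorem Fintype.sum_ite_eqOn_compl_prod {ι β R : Type*} [Fintype ι] [DecidableEq ι]
    [Fintype β] [DecidableEq β] [CommSemiring R] (A : Finset ι) (x : ι → β)
    (f : ι → β → R) :
    ∑ y : ι → β, (if ∀ j ∉ A, x j = y j then ∏ k ∈ A, f k (y k) else 0) =
      ∏ k ∈ A, ∑ b, f k b := by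
  let F : ι → β → R := fun j b => if j ∈ A then f j b else if x j = b then 1 else 0
  have hF : ∀ y : ι → β, ∏ j, F j (y j) =
      if ∀ j ∉ A, x j = y j then ∏ k ∈ A, f k (y k) else 0 := by
    intro y
    simp only [F]
    rw [Finset.prod_ite, Finset.prod_boole, Finset.filter_mem_eq_inter, Finset.univ_inter]
    simp only [Finset.mem_filter, Finset.mem_univ, true_and]
    split_ifs <;> simp
  have hsumF : ∏ j, ∑ b, F j b = ∏ k ∈ A, ∑ b, f k b := by
    simp only [F]
    rw [← Finset.prod_subset (Finset.subset_univ A)]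
    · exact Finset.prod_congr rfl fun j hj => by simp [hj]
    · intro j _ hj; simp [hj]
  simp_rw [← hF, ← hsumF, Fintype.prod_sum]

theorem opNorm_le_of_sum_norm_le {ι : Type*} [Fintype ι] [DecidableEq ι]
    (M : Matrix ι ι ℂ) {r : ℝ} (hr : 0 ≤ r) (hrow : ∀ i, ∑ j, ‖M i j‖ ≤ r)
    (hcol : ∀ j, ∑ i, ‖M i j‖ ≤ r) : opNorm M ≤ r := by
  refine ContinuousLinearMap.opNorm_le_bound _ hr fun x => ?_
  obtain ⟨v, rfl⟩ : ∃ v : ι → ℂ, WithLp.toLp 2 v = x := ⟨x.ofLp, rfl⟩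
  rw [Matrix.toEuclideanCLM_toLp, EuclideanSpace.norm_eq, EuclideanSpace.norm_eq]
  -- Cauchy–Schwarz with weights `‖M i j‖` gives `|(M v)_i|² ≤ r ∑_j ‖M i j‖ ‖v j‖²`.
  have hrowwise : ∀ i, ‖M.mulVec v i‖ ^ 2 ≤ r * ∑ j, ‖M i j‖ * ‖v j‖ ^ 2 := by
    intro i
    have htri : ‖M.mulVec v i‖ ≤ ∑ j, ‖M i j‖ * ‖v j‖ := by
      simpa [Matrix.mulVec, dotProduct] using norm_sum_le Finset.univ fun j => M i j * v j
    calc ‖M.mulVec v i‖ ^ 2 ≤ (∑ j, ‖M i j‖ * ‖v j‖) ^ 2 := by gcongr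
      _ ≤ (∑ j, ‖M i j‖) * ∑ j, ‖M i j‖ * ‖v j‖ ^ 2 :=
        Finset.sum_sq_le_sum_mul_sum_of_sq_le_mul _ (fun j _ => norm_nonneg _)
          (fun j _ => by positivity) (fun j _ => le_of_eq (by ring))
      _ ≤ r * ∑ j, ‖M i j‖ * ‖v j‖ ^ 2 := by gcongr; exact hrow i
  have hsq : ∑ i, ‖M.mulVec v i‖ ^ 2 ≤ r ^ 2 * ∑ j, ‖v j‖ ^ 2 :=
    calc ∑ i, ‖M.mulVec v i‖ ^ 2 ≤ ∑ i, r * ∑ j, ‖M i j‖ * ‖v j‖ ^ 2 :=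
          Finset.sum_le_sum fun i _ => hrowwise i
      _ = r * ∑ j, (∑ i, ‖M i j‖) * ‖v j‖ ^ 2 := by
          rw [← Finset.mul_sum, Finset.sum_comm]; simp_rw [Finset.sum_mul]
      _ ≤ r * ∑ j, r * ‖v j‖ ^ 2 := by gcongr with j; exact hcol j
      _ = r ^ 2 * ∑ j, ‖v j‖ ^ 2 := by rw [← Finset.mul_sum]; ring
  calc √(∑ i, ‖M.mulVec v i‖ ^ 2) ≤ √(r ^ 2 * ∑ j, ‖v j‖ ^ 2) := Real.sqrt_le_sqrt hsq
    _ = r * √(∑ j, ‖v j‖ ^ 2) := by rw [Real.sqrt_mul (sq_nonneg r), Real.sqrt_sq hr]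

theorem opNorm_le_of_norm_le_of_symm {ι : Type*} [Fintype ι] [DecidableEq ι] [Nonempty ι]
    (M : Matrix ι ι ℂ) (E : ι → ι → ℝ) {r : ℝ} (hME : ∀ i j, ‖M i j‖ ≤ E i j)
    (hE : ∀ i j, E i j = E j i) (hrow : ∀ i, ∑ j, E i j ≤ r) : opNorm M ≤ r := by
  have hrowM : ∀ i, ∑ j, ‖M i j‖ ≤ r := fun i =>
    (Finset.sum_le_sum fun j _ => hME i j).trans (hrow i)
  refine opNorm_le_of_sum_norm_le M ?_ hrowM fun j => ?_
  · obtain ⟨i⟩ := ‹Nonempty ι›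
    exact (Finset.sum_nonneg fun j _ => norm_nonneg _).trans (hrowM i)
  · calc ∑ i, ‖M i j‖ ≤ ∑ i, E j i := Finset.sum_le_sum fun i _ => (hME i j).trans (hE i j).le
      _ ≤ r := hrow j

/-- The `k`-th summand is the `k`-th telescoping term for a product of factors of modulus `1/2`
whose `k`-th factor changes by at most `s`, and not at all where `x k = y k`. -/
def blockMajorant {n : ℕ} (s : ℝ) (A : Finset (Fin n)) (x y : QIdx n) : ℝ :=
  if ∀ j ∉ A, x j = y j then
    ∑ k ∈ A, ∏ j ∈ A, (if j = k then (if x j = y j then 0 else s) else 1 / 2)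
  else 0

theorem blockMajorant_comm {n : ℕ} (s : ℝ) (A : Finset (Fin n)) (x y : QIdx n) :
    blockMajorant s A x y = blockMajorant s A y x := by
  simp only [blockMajorant, eq_comm (a := x _)]

theorem sum_blockMajorant {n : ℕ} (s : ℝ) (A : Finset (Fin n)) (x : QIdx n) :
    ∑ y, blockMajorant s A x y = A.card * s := by
  have hsite : ∀ k ∈ A, ∏ j ∈ A, ∑ b : Fin 2,
      (if j = k then (if x j = b then 0 else s) else 1 / 2) = s := by
    intro k hk
    rw [Finset.prod_eq_single_of_mem k hk fun j _ hjk => by simp [hjk]]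
    generalize x k = c
    fin_cases c <;> simp
  have hswap : ∀ y, blockMajorant s A x y = ∑ k ∈ A, if ∀ j ∉ A, x j = y j then
      ∏ j ∈ A, (if j = k then (if x j = y j then 0 else s) else 1 / 2) else 0 := by
    intro y
    rw [blockMajorant]
    split_ifs <;> simp
  simp_rw [hswap]
  rw [Finset.sum_comm, ← nsmul_eq_mul, ← Finset.sum_const]
  refine Finset.sum_congr rfl fun k hk => ?_
  convert (Fintype.sum_ite_eqOn_compl_prod A x
    fun j b => if j = k then (if x j = b then 0 else s) else 1 / 2).trans (hsite k hk)

theorem norm_PopH_sub_Pop_apply_le {n : ℕ} (θ : Fin n → Fin n → ℝ) {h : ℕ} (hh : 1 ≤ h)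
    (A : Finset (Fin n)) (x y : QIdx n) :
    ‖(PopH n θ h A - Pop n θ A) x y‖ ≤ blockMajorant (Real.sin (Real.pi / (4 * h))) A x y := by
  rw [Matrix.sub_apply, PopH, Pop, Matrix.of_apply, Matrix.of_apply, blockMajorant]
  split_ifs with hxy
  swap
  · simp
  refine (Finset.norm_prod_sub_prod_le A (c := fun _ => 1 / 2)
    (fun k _ => (norm_phaseFac _ _ _).le) (fun k _ => (norm_phaseFac _ _ _).le)).trans
    (Finset.sum_le_sum fun k hk => ?_)
  rw [← Finset.mul_prod_erase A _ hk, if_pos rfl,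
    Finset.prod_congr rfl fun j hj => if_neg (Finset.ne_of_mem_erase hj)]
  gcongr
  exact norm_phaseFac_alphaH_sub_le hh _ _ _

theorem Finset.sum_card_eq_of_partition {ι α : Type*} [Fintype ι] [Fintype α] [DecidableEq α]
    (A : ι → Finset α) (hdisj : ∀ l l', l ≠ l' → Disjoint (A l) (A l'))
    (hcover : ∀ v, ∃ l, v ∈ A l) : ∑ l, (A l).card = Fintype.card α := by
  rw [← Finset.card_biUnion fun l _ l' _ h => hdisj l l' h, ← Finset.card_univ]
  congr
  exact Finset.eq_univ_of_forall fun v => by simpa using hcover v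

theorem opNorm_OmegaAH_sub_OmegaA_general
    (n m : ℕ)
    (θ : Fin n → Fin n → ℝ)
    (A : Fin m → Finset (Fin n))
    (hdisj : ∀ l l', l ≠ l' → Disjoint (A l) (A l'))
    (hcover : ∀ v : Fin n, ∃ l, v ∈ A l)
    (h : ℕ) (hh : 1 ≤ h) :
    opNorm (OmegaAH n m θ h A - OmegaA n m θ A) ≤
      ((∑ l, ((A l).card : ℝ)) / m) * Real.sin (Real.pi / (4 * h)) ∧
    (∑ l, ((A l).card : ℝ)) / m = (n : ℝ) / m := by
  set s := Real.sin (Real.pi / (4 * h))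
  have hcard : ∑ l, ((A l).card : ℝ) = n := by
    exact_mod_cast (Finset.sum_card_eq_of_partition A hdisj hcover).trans (Fintype.card_fin n)
  refine ⟨?_, by rw [hcard]⟩
  have hdiff : OmegaAH n m θ h A - OmegaA n m θ A =
      (m : ℂ)⁻¹ • ∑ l, (PopH n θ h (A l) - Pop n θ (A l)) := by
    rw [OmegaAH, OmegaA, ← smul_sub, ← Finset.sum_sub_distrib]
  refine opNorm_le_of_norm_le_of_symm _ (fun x y => (m : ℝ)⁻¹ * ∑ l, blockMajorant s (A l) x y)
    (fun x y => ?_) (fun x y => by simp_rw [blockMajorant_comm s _ x y]) (fun x => ?_)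
  · rw [hdiff, Matrix.smul_apply, Matrix.sum_apply, smul_eq_mul, norm_mul, norm_inv,
      Complex.norm_natCast]
    gcongr
    exact (norm_sum_le _ _).trans
      (Finset.sum_le_sum fun l _ => norm_PopH_sub_Pop_apply_le θ hh (A l) x y)
  · rw [← Finset.mul_sum, Finset.sum_comm]
    simp_rw [sum_blockMajorant]
    rw [← Finset.sum_mul, inv_mul_eq_div, div_mul_eq_mul_div]

/-- `‖Ω_h(𝒜) - Ω(𝒜)‖ ≤ (∑_l |A_l|/m) sin(π/4h) = (n/m) sin(π/4h)`. -/
theorem opNorm_OmegaAH_sub_OmegaA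
    (n m : ℕ) (hn : 1 ≤ n) (hm : 1 ≤ m)
    (G : SimpleGraph (Fin n)) (θ : Fin n → Fin n → ℝ)
    (hsym : ∀ j k, θ j k = θ k j)
    (hθ : ∀ j k, ¬ G.Adj j k → θ j k = 0)
    (A : Fin m → Finset (Fin n))
    (hdisj : ∀ l l', l ≠ l' → Disjoint (A l) (A l'))
    (hcover : ∀ v : Fin n, ∃ l, v ∈ A l)
    (hne : ∀ l, (A l).Nonempty)
    (hind : ∀ l, ∀ j ∈ A l, ∀ k ∈ A l, ¬ G.Adj j k)
    (h : ℕ) (hh : 1 ≤ h) :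
    opNorm (OmegaAH n m θ h A - OmegaA n m θ A) ≤
      ((∑ l, ((A l).card : ℝ)) / m) * Real.sin (Real.pi / (4 * h)) ∧
    (∑ l, ((A l).card : ℝ)) / m = (n : ℝ) / m :=
  opNorm_OmegaAH_sub_OmegaA_general n m θ A hdisj hcover h hh
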